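/- arXiv:1702.04549 — 2 statements merged into one kernel-verified Lean document; each statement's English description precedes it below -/
import Mathlib

section
/- For all ν > -1, the inequality ((ν+1)²(ν+2)/(56ν+137))^(1/4) ≤ √((ν+1)(ν+3)(56ν+137)/(2(208ν²+1172ν+1693))) holds. -/
/-!
Raising both sides to the fourth power, it suffices that `A ≤ B ^ 2` for the two radicands.
With `x = ν + 1 > 0`, clearing denominators turns this into a polynomial inequality whose
difference is `x ^ 4 * (2560 x ^ 3 + 33472 x ^ 2 + 95720 x + 80433)`, with positive coefficients.
-/

lemma Real.rpow_one_div_four_le_sqrt {a b : ℝ} (ha : 0 ≤ a) (hb : 0 ≤ b) (hab : a ≤ b ^ 2) :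
    a ^ ((1 : ℝ) / 4) ≤ √b :=
  calc a ^ ((1 : ℝ) / 4) ≤ (b ^ 2) ^ ((1 : ℝ) / 4) := Real.rpow_le_rpow ha hab (by norm_num)
    _ = b ^ ((1 : ℝ) / 2) := by
      rw [← Real.rpow_natCast b 2, ← Real.rpow_mul hb]
      norm_num
    _ = √b := (Real.sqrt_eq_rpow b).symm

lemma bessel_quartic_radicand_le_sq (ν : ℝ) (hν : -1 < ν) :
    (ν + 1) ^ 2 * (ν + 2) / (56 * ν + 137) ≤
      ((ν + 1) * (ν + 3) * (56 * ν + 137) / (2 * (208 * ν ^ 2 + 1172 * ν + 1693))) ^ 2 := by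
  have hx : 0 < ν + 1 := by linarith
  have hD : 0 < 208 * ν ^ 2 + 1172 * ν + 1693 := by nlinarith
  rw [div_pow, div_le_div_iff₀ (by linarith) (by positivity), ← sub_nonneg]
  have hdiff : ((ν + 1) * (ν + 3) * (56 * ν + 137)) ^ 2 * (56 * ν + 137) -
      (ν + 1) ^ 2 * (ν + 2) * (2 * (208 * ν ^ 2 + 1172 * ν + 1693)) ^ 2 =
      (ν + 1) ^ 4 * (2560 * (ν + 1) ^ 3 + 33472 * (ν + 1) ^ 2 + 95720 * (ν + 1) + 80433) := by
    ring
  rw [hdiff]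
  positivity

theorem bessel_convexity_bounds_g2 (ν : ℝ) (hν : -1 < ν) :
    ((ν + 1) ^ 2 * (ν + 2) / (56 * ν + 137)) ^ ((1 : ℝ) / 4) ≤
      Real.sqrt ((ν + 1) * (ν + 3) * (56 * ν + 137) / (2 * (208 * ν ^ 2 + 1172 * ν + 1693))) := by
  have hx : 0 < ν + 1 := by linarith
  have h137 : 0 < 56 * ν + 137 := by linarith
  have hD : 0 < 208 * ν ^ 2 + 1172 * ν + 1693 := by nlinarith
  refine Real.rpow_one_div_four_le_sqrt ?_ ?_ (bessel_quartic_radicand_le_sq ν hν)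
  · have : 0 < ν + 2 := by linarith
    positivity
  · have : 0 < ν + 3 := by linarith
    positivity
end

section
/- For all ν > -1, the inequality √((ν+1)²(ν+2)/(7ν+23)) ≤ (ν+1)(ν+3)(7ν+23)/(2(9ν²+60ν+115)) holds. -/
/-! Squaring and clearing denominators reduces the claim to the polynomial inequality
`(ν + 2) (2 (9ν² + 60ν + 115))² ≤ ((ν + 3)(7ν + 23))² (7ν + 23)`, whose gap is
`t² (19 t³ + 376 t² + 1468 t + 1840)` with `t = ν + 1 > 0`. -/

theorem Real.sqrt_sq_mul_div_le_mul_div {a p q r s : ℝ} (ha : 0 ≤ a) (hq : 0 < q) (hr : 0 ≤ r)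
    (hs : 0 < s) (h : p * s ^ 2 ≤ r ^ 2 * q) : √(a ^ 2 * p / q) ≤ a * r / s := by
  rw [Real.sqrt_le_left (by positivity), div_pow, mul_pow,
    div_le_div_iff₀ hq (by positivity), mul_assoc, mul_assoc]
  exact mul_le_mul_of_nonneg_left h (sq_nonneg a)

theorem h4_polynomial_le {ν : ℝ} (hν : -1 < ν) :
    (ν + 2) * (2 * (9 * ν ^ 2 + 60 * ν + 115)) ^ 2 ≤ ((ν + 3) * (7 * ν + 23)) ^ 2 * (7 * ν + 23) := by
  obtain ⟨t, ht, rfl⟩ : ∃ t, 0 < t ∧ ν = t - 1 := ⟨ν + 1, by linarith, by ring⟩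
  have gap : ((t - 1 + 3) * (7 * (t - 1) + 23)) ^ 2 * (7 * (t - 1) + 23) =
      (t - 1 + 2) * (2 * (9 * (t - 1) ^ 2 + 60 * (t - 1) + 115)) ^ 2 +
        t ^ 2 * (19 * t ^ 3 + 376 * t ^ 2 + 1468 * t + 1840) := by
    ring
  rw [gap]
  exact le_add_of_nonneg_right (by positivity)

theorem bessel_convexity_bounds_h4 (ν : ℝ) (hν : -1 < ν) :
    Real.sqrt ((ν + 1) ^ 2 * (ν + 2) / (7 * ν + 23)) ≤
      (ν + 1) * (ν + 3) * (7 * ν + 23) / (2 * (9 * ν ^ 2 + 60 * ν + 115)) := by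
  have hq : 0 < 7 * ν + 23 := by linarith
  have hs : 0 < 2 * (9 * ν ^ 2 + 60 * ν + 115) := by nlinarith [sq_nonneg (3 * ν + 10)]
  rw [mul_assoc (ν + 1)]
  exact Real.sqrt_sq_mul_div_le_mul_div (by linarith) hq (mul_pos (by linarith) hq).le hs (h4_polynomial_le hν)
end
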